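/- For all k ≥ 0 and b ≥ 1, the Toads and Frogs position □ T^k F □ T F^b satisfies □ T^k F □ T F^b ≤ 0. -/

import Mathlib

universe u

namespace SetTheory

/-- Pre-games, as in Mathlib's former `SetTheory.PGame` (removed from Mathlib). -/
inductive PGame : Type (u + 1)
  | mk : ∀ α β : Type u, (α → PGame) → (β → PGame) → PGame

namespace PGame

instance : Zero PGame := ⟨mk PEmpty PEmpty PEmpty.elim PEmpty.elim⟩

/-- Negation of a pre-game, as in former Mathlib. -/
def neg : PGame → PGame
  | mk l r L R => mk r l (fun i => neg (R i)) (fun i => neg (L i))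

instance : Neg PGame := ⟨neg⟩

/-- The pair `(x ≤ y, x ⧏ y)`, characterized as in former Mathlib by
`x ≤ y ↔ (∀ i, xL i ⧏ y) ∧ ∀ j, x ⧏ yR j` and
`x ⧏ y ↔ (∃ i, x ≤ yL i) ∨ ∃ j, xR j ≤ y`. -/
noncomputable def leLF (x : PGame) : PGame → Prop × Prop :=
  PGame.rec (motive := fun _ => PGame → Prop × Prop)
    (fun _ _ _ _ ihxL ihxR y =>
      PGame.rec (motive := fun _ => Prop × Prop)
        (fun _ _ yL yR ihyL ihyR =>
          ((∀ i, (ihxL i (mk _ _ yL yR)).2) ∧ ∀ j, (ihyR j).2,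
           (∃ i, (ihyL i).1) ∨ ∃ j, (ihxR j (mk _ _ yL yR)).1)) y) x

noncomputable instance : LE PGame := ⟨fun x y => (leLF x y).1⟩

end PGame

end SetTheory

open SetTheory

inductive Cell : Type
  | T | F | E
deriving DecidableEq

/-- Positions reachable from `l` by a single Toad (Left) move:
a Toad steps right into an empty square, or jumps over one adjacent Frog
into the empty square beyond. -/
def toadMoves : List Cell → List (List Cell)
  | [] => []
  | c :: rest =>
    (match c, rest with
     | Cell.T, Cell.E :: r => [Cell.E :: Cell.T :: r]
     | Cell.T, Cell.F :: Cell.E :: r => [Cell.E :: Cell.F :: Cell.T :: r]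
     | _, _ => []) ++ (toadMoves rest).map (c :: ·)

/-- Positions reachable from `l` by a single Frog (Right) move. -/
def frogMoves : List Cell → List (List Cell)
  | [] => []
  | c :: rest =>
    (match c, rest with
     | Cell.E, Cell.F :: r => [Cell.F :: Cell.E :: r]
     | Cell.E, Cell.T :: Cell.F :: r => [Cell.F :: Cell.T :: Cell.E :: r]
     | _, _ => []) ++ (frogMoves rest).map (c :: ·)

/-- A weight which strictly decreases with every legal move: each Toad
contributes the number of squares strictly to its right, each Frog the number
of squares strictly to its left. -/
def wt : List Cell → ℕ
  | [] => 0
  | c :: rest =>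
    (if c = Cell.T then rest.length else 0) + rest.countP (· = Cell.F) + wt rest

/-- Game tree with fuel; since `wt` strictly decreases along moves and
positions of weight `0` have no moves, `gameAux n l` is the true game
tree of `l` whenever `wt l ≤ n`. -/
def gameAux : ℕ → List Cell → PGame
  | 0, _ => 0
  | n + 1, l =>
    PGame.mk {m // m ∈ toadMoves l} {m // m ∈ frogMoves l}
      (fun m => gameAux n m.1) (fun m => gameAux n m.1)

/-- The game (PGame) associated to a Toads and Frogs position. -/
def tfGame (l : List Cell) : PGame := gameAux (wt l + 1) l

/-- The game `{x | y}` with a single Left option `x` and single Right option `y`. -/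
def gmk (x y : PGame) : PGame :=
  PGame.mk PUnit PUnit (fun _ => x) (fun _ => y)

/-- The canonical game of a natural number. -/
def natGame : ℕ → PGame
  | 0 => 0
  | n + 1 => PGame.mk PUnit PEmpty (fun _ => natGame n) (fun x => x.elim)

/-- The canonical game of an integer. -/
def intGame : ℤ → PGame
  | Int.ofNat n => natGame n
  | Int.negSucc n => -natGame (n + 1)

/-- `(TF)^b` : the block `TF` repeated `b` times. -/
def tfBlock (b : ℕ) : List Cell := (List.replicate b [Cell.T, Cell.F]).flatten

/-
Every Left move in `□ T^k F □ s` (with no empty square in `s`) is forced: the last Toad of the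
block jumps the Frog, giving `□ T^(k-1) □ F T s`. Right answers by stepping that Frog back,
which restores the same shape `□ T^(k-1) F □ (T s)` with one Toad fewer in the block. When the
block is empty Left has no move at all, so by induction on `k` Left, moving first, always loses.
-/

open Cell List

namespace SetTheory.PGame

lemma mk_le_zero {α β : Type u} {L : α → PGame.{u}} {R : β → PGame.{u}}
    (h : ∀ i, (leLF (L i) (0 : PGame.{u})).2) : mk α β L R ≤ 0 :=
  ⟨h, fun j => j.elim⟩

lemma mk_lf_zero_of_le {α β : Type u} {L : α → PGame.{u}} {R : β → PGame.{u}} (j : β)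
    (h : R j ≤ 0) : (leLF (mk α β L R) (0 : PGame.{u})).2 :=
  Or.inr ⟨j, h⟩

end SetTheory.PGame

open SetTheory.PGame

lemma toadMoves_eq_nil_of_not_mem {l : List Cell} (h : E ∉ l) : toadMoves l = [] := by
  induction l with
  | nil => rfl
  | cons c rest ih =>
    rw [mem_cons, not_or] at h
    rcases c with _ | _ | _ <;> rcases rest with _ | ⟨_ | _ | _, _ | ⟨_ | _ | _, _⟩⟩ <;>
      simp_all [toadMoves]

lemma toadMoves_replicate_T_append (k : ℕ) (s : List Cell) :
    toadMoves (replicate (k + 1) T ++ F :: E :: s) =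
      (replicate k T ++ E :: F :: T :: s) ::
        (toadMoves s).map (replicate (k + 1) T ++ F :: E :: ·) := by
  induction k with
  | zero => simp [toadMoves, Function.comp_def]
  | succ k ih =>
    calc toadMoves (T :: (replicate (k + 1) T ++ F :: E :: s))
        = (toadMoves (replicate (k + 1) T ++ F :: E :: s)).map (T :: ·) := rfl
      _ = _ := by rw [ih]; simp [replicate_succ]

lemma append_mem_frogMoves (p r : List Cell) : p ++ F :: E :: r ∈ frogMoves (p ++ E :: F :: r) := by
  induction p with
  | nil => simp [frogMoves]
  | cons c p ih => exact mem_append_right _ (mem_map_of_mem ih)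

lemma mul_length_le_wt_replicate_append (k : ℕ) (l : List Cell) :
    k * l.length ≤ wt (replicate k T ++ l) := by
  induction k with
  | zero => simp
  | succ k ih =>
    simp only [replicate_succ, cons_append, wt, if_pos, length_append, length_replicate]
    nlinarith

def leapPos (k : ℕ) (s : List Cell) : List Cell := E :: (replicate k T ++ F :: E :: s)

lemma two_mul_le_wt_leapPos (k : ℕ) (s : List Cell) : 2 * k ≤ wt (leapPos k s) := by
  have := mul_length_le_wt_replicate_append k (F :: E :: s)
  simp only [leapPos, wt, length_cons, reduceCtorEq, if_false] at *
  nlinarith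

lemma gameAux_le_zero_of_toadMoves_eq_nil {l : List Cell} (h : toadMoves l = []) :
    ∀ n, gameAux n l ≤ 0
  | 0 => mk_le_zero fun i => i.elim
  | n + 1 => mk_le_zero fun ⟨m, hm⟩ => by simp [h] at hm

lemma gameAux_le_zero_of_frog_reply {n : ℕ} {l : List Cell}
    (h : ∀ m ∈ toadMoves l, ∃ m' ∈ frogMoves m, gameAux n m' ≤ 0) : gameAux (n + 2) l ≤ 0 := by
  refine mk_le_zero fun ⟨m, hm⟩ => ?_
  obtain ⟨m', hm', hle⟩ := h m hm
  exact mk_lf_zero_of_le (α := {x // x ∈ toadMoves m}) ⟨m', hm'⟩ hle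

-- Each round of the strategy burns two units of fuel; `two_mul_le_wt_leapPos` shows that
-- `tfGame` supplies enough.
lemma gameAux_leapPos_le_zero {s : List Cell} (hs : E ∉ s) :
    ∀ k n, 2 * k ≤ n → gameAux n (leapPos k s) ≤ 0
  | 0, n, _ => gameAux_le_zero_of_toadMoves_eq_nil (by
      simp [leapPos, toadMoves, toadMoves_eq_nil_of_not_mem hs]) n
  | k + 1, n, hn => by
    obtain ⟨n, rfl⟩ : ∃ m, n = m + 2 := ⟨n - 2, by omega⟩
    refine gameAux_le_zero_of_frog_reply fun m hm => ?_
    have hleap : m = E :: (replicate k T ++ E :: F :: T :: s) := by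
      simpa [leapPos, toadMoves, toadMoves_replicate_T_append, toadMoves_eq_nil_of_not_mem hs]
        using hm
    refine ⟨leapPos k (T :: s), hleap ▸ append_mem_frogMoves (E :: replicate k T) (T :: s), ?_⟩
    exact gameAux_leapPos_le_zero (by simpa using hs) k n (by omega)

theorem box_TkF_box_TFb_nonpos_general (k b : ℕ) :
    tfGame ([Cell.E] ++ List.replicate k Cell.T ++ [Cell.F, Cell.E, Cell.T] ++
        List.replicate b Cell.F) ≤ 0 := by
  have hpos : [E] ++ replicate k T ++ [F, E, T] ++ replicate b F =
      leapPos k (T :: replicate b F) := by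
    simp [leapPos]
  rw [hpos, tfGame]
  refine gameAux_leapPos_le_zero (by simp [mem_replicate]) k _ ?_
  linarith [two_mul_le_wt_leapPos k (T :: replicate b F)]

/-- `□ T^k F □ T F^b ≤ 0` for all `k ≥ 0`, `b ≥ 1`. -/
theorem box_TkF_box_TFb_nonpos (k b : ℕ) (hb : 1 ≤ b) :
    tfGame ([Cell.E] ++ List.replicate k Cell.T ++ [Cell.F, Cell.E, Cell.T] ++
        List.replicate b Cell.F) ≤ 0 :=
  box_TkF_box_TFb_nonpos_general k b
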